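/- A homogeneous element B ∈ L_∞ satisfies ‖B‖ = ‖φBφ‖ for every φ ∈ F_0, where F_0 is the localizing class at the cone vertex. -/

import Mathlib

open Filter Topology ZeroAtInfty

section Cone

variable {K : Type*} [TopologicalSpace K] [LocallyCompactSpace K] [T2Space K]
variable {H : Type*} [NormedAddCommGroup H] [InnerProductSpace ℂ H] [CompleteSpace H]

/-- The axioms of a cone: a distinguished vertex together with a multiplicative
dilation group `g_λ` (`λ > 0`) fixing the vertex, such that every compact set is moved
into any given neighborhood of the vertex by all sufficiently small dilations. -/
structure ConeStruct (K : Type*) [TopologicalSpace K] where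
  vertex : K
  g : ℝ → K → K
  g_cont : ∀ l : ℝ, 0 < l → Continuous (g l)
  g_one : g 1 = id
  g_mul : ∀ l m : ℝ, 0 < l → 0 < m → ∀ z, g (l * m) z = g l (g m z)
  g_vertex : ∀ l : ℝ, 0 < l → g l vertex = vertex
  g_shrink : ∀ Q : Set K, IsCompact Q → ∀ V ∈ 𝓝 vertex,
    ∃ ε > (0:ℝ), ∀ l : ℝ, 0 < l → l < ε → g l '' Q ⊆ V

/-- The localizing class `F₀` at the vertex of the cone: compactly supported continuous
functions with values in `[0,1]` equal to `1` in a neighborhood of the vertex. -/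
def coneLocClass (c : ConeStruct K) : Set C₀(K, ℂ) :=
  {φ | HasCompactSupport ⇑φ ∧ (∀ z, (φ z).re ∈ Set.Icc (0:ℝ) 1 ∧ (φ z).im = 0) ∧
    ∃ V ∈ 𝓝 c.vertex, ∀ z ∈ V, φ z = 1}

variable (π : C₀(K, ℂ) →⋆ₙₐ[ℂ] (H →L[ℂ] H))

/-- A strongly continuous one-parameter unitary group `U_λ` (`λ > 0`). -/
def IsUnitaryDilGroup (U : ℝ → H →L[ℂ] H) : Prop :=
  U 1 = 1 ∧ (∀ l m : ℝ, 0 < l → 0 < m → U (l * m) = U l ∘L U m) ∧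
    (∀ l : ℝ, 0 < l → ∀ v, ‖U l v‖ = ‖v‖) ∧
    ∀ v : H, ContinuousOn (fun l => U l v) (Set.Ioi (0:ℝ))

/-- Compatibility of the unitary group with the module structure:
`U_λ φ U_λ⁻¹ = φ ∘ g_λ`, stated as `π(φ ∘ g_λ) U_λ = U_λ π(φ)`. -/
def DilCompatible (c : ConeStruct K) (U : ℝ → H →L[ℂ] H) : Prop :=
  ∀ l : ℝ, 0 < l → ∀ φ ψ : C₀(K, ℂ), (∀ z, ψ z = φ (c.g l z)) →
    (π ψ) ∘L (U l) = (U l) ∘L (π φ)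

/-- The localization condition at the vertex: the localizing class `F₀`, directed by
`φ ≺ ψ ↔ φψ = ψ`, converges strongly to `0`. -/
def VertexLocConv (c : ConeStruct K) : Prop :=
  ∀ (v : H) (ε : ℝ), 0 < ε →
    ∃ φ ∈ coneLocClass c, ∀ ψ ∈ coneLocClass c, φ * ψ = ψ → ‖π ψ v‖ < ε

/-- Nondegeneracy: the strong closure of the image of `C₀(K)` contains the identity. -/
def NondegenerateModule : Prop :=
  ∀ (v : H) (ε : ℝ), 0 < ε → ∃ φ : C₀(K, ℂ), ‖π φ v - v‖ < ε

end Cone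

section Families

variable {K : Type*} [TopologicalSpace K] [LocallyCompactSpace K] [T2Space K]
variable {H : Type*} [NormedAddCommGroup H] [InnerProductSpace ℂ H] [CompleteSpace H]
variable {Y : Type*} [TopologicalSpace Y]

/-- Membership in the ideal `J = C₀(Y, K(H))`: compact-valued families tending to zero
in norm at infinity. -/
def MemJIdeal (D : Y → H →L[ℂ] H) : Prop :=
  (∀ y, IsCompactOperator ⇑(D y)) ∧ Tendsto (fun y => ‖D y‖) (cocompact Y) (𝓝 0)

variable (π : C₀(K, ℂ) →⋆ₙₐ[ℂ] (H →L[ℂ] H))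

/-- Membership in the algebra `L` of bounded continuous families commuting with the
`C₀(K)`-action modulo the ideal `J`. -/
def MemLAlg (B : Y → H →L[ℂ] H) : Prop :=
  Continuous B ∧ (∃ M, ∀ y, ‖B y‖ ≤ M) ∧
    ∀ φ : C₀(K, ℂ), MemJIdeal (fun y => B y ∘L π φ - π φ ∘L B y)

/-- Membership in the ideal `J₀ ⊂ L` of almost compact families:
`Bφ ∈ J` for every `φ ∈ C₀(K)`. -/
def MemAlmostCompact (B : Y → H →L[ℂ] H) : Prop :=
  ∀ φ : C₀(K, ℂ), MemJIdeal (fun y => B y ∘L π φ)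

/-- Homogeneity of a family: `U_λ⁻¹ B(λy) U_λ = B(y)`. -/
def IsHomogeneousFamily (U : ℝ → H →L[ℂ] H) (act : ℝ → Y → Y)
    (B : Y → H →L[ℂ] H) : Prop :=
  ∀ l : ℝ, 0 < l → ∀ y, (U l⁻¹) ∘L B (act l y) ∘L (U l) = B y

end Families

/-! Write `φ_λ = φ ∘ g_{1/λ}`. Compatibility of `U` with the module structure and homogeneity of
`B` give `π(φ_λ) B(y) π(φ_λ) = U_{1/λ} π(φ) B(λy) π(φ) U_λ`, so every `‖π(φ_λ) B(y) π(φ_λ)‖` is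
bounded by `sup_z ‖π(φ) B(z) π(φ)‖`. Since the dilations shrink compact sets into the region where
`φ = 1`, the `φ_λ` form an approximate unit of `C₀(K)` as `λ → ∞`; by nondegeneracy `π(φ_λ) → 1`
strongly, so `π(φ_λ) B(y) π(φ_λ) → B(y)` strongly and `‖B(y)‖` obeys the same bound. The reverse
inequality is `‖π(φ)‖ ≤ 1`. -/

-- For unbounded families both sides are the junk value `sSup ∅`.
theorem ciSup_eq_ciSup_of_le_of_forall_le {α ι : Type*} [ConditionallyCompleteLinearOrder α]
    {f g : ι → α} (hgf : ∀ i, g i ≤ f i) (hfg : ∀ C, (∀ j, g j ≤ C) → ∀ i, f i ≤ C) :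
    ⨆ i, f i = ⨆ i, g i := by
  rcases isEmpty_or_nonempty ι with hι | hι
  · simp only [iSup_of_empty']
  by_cases hg : BddAbove (Set.range g)
  · have hf : BddAbove (Set.range f) :=
      ⟨_, Set.forall_mem_range.2 (hfg _ fun j => le_ciSup hg j)⟩
    exact le_antisymm (ciSup_le (hfg _ (le_ciSup hg)))
      (ciSup_le fun i => (hgf i).trans (le_ciSup hf i))
  · rw [ciSup_of_not_bddAbove hg, ciSup_of_not_bddAbove (mt (BddAbove.range_mono f hgf) hg)]

namespace ContinuousLinearMap

variable {𝕜 E : Type*} [NontriviallyNormedField 𝕜] [SeminormedAddCommGroup E] [NormedSpace 𝕜 E]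
  {P : E →L[𝕜] E}

theorem norm_comp_comp_le_of_norm_le_one (hP : ‖P‖ ≤ 1) (T : E →L[𝕜] E) :
    ‖P ∘L T ∘L P‖ ≤ ‖T‖ :=
  calc ‖P ∘L T ∘L P‖ ≤ ‖P‖ * (‖T‖ * ‖P‖) :=
        (opNorm_comp_le _ _).trans (by gcongr; exact opNorm_comp_le _ _)
    _ ≤ 1 * (‖T‖ * 1) := by gcongr
    _ = ‖T‖ := by ring

theorem norm_apply_le_norm_comp_comp_apply_add (hP : ‖P‖ ≤ 1) (T : E →L[𝕜] E) (v : E) :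
    ‖T v‖ ≤ ‖(P ∘L T ∘L P) v‖ + ‖T v - P (T v)‖ + ‖T‖ * ‖v - P v‖ := by
  have hsplit : T v = (P ∘L T ∘L P) v + (T v - P (T v)) + P (T (v - P v)) := by
    simp only [comp_apply, map_sub]; abel
  have hPT : ‖P (T (v - P v))‖ ≤ ‖T‖ * ‖v - P v‖ :=
    calc ‖P (T (v - P v))‖ ≤ 1 * (‖T‖ * ‖v - P v‖) :=
          (le_opNorm_of_le _ (le_opNorm _ _)).trans (by gcongr)
      _ = ‖T‖ * ‖v - P v‖ := one_mul _
  calc ‖T v‖ ≤ ‖(P ∘L T ∘L P) v‖ + ‖T v - P (T v)‖ + ‖P (T (v - P v))‖ :=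
        (congrArg norm hsplit).trans_le norm_add₃_le
    _ ≤ _ := by gcongr

end ContinuousLinearMap

theorem ZeroAtInftyContinuousMap.norm_le_of_forall_le {α β : Type*} [TopologicalSpace α]
    [SeminormedAddCommGroup β] {f : C₀(α, β)} {C : ℝ} (hC : 0 ≤ C) (h : ∀ z, ‖f z‖ ≤ C) :
    ‖f‖ ≤ C := by
  rw [← norm_toBCF_eq_norm]
  exact (BoundedContinuousFunction.norm_le hC).2 h

namespace ConeStruct

variable {K : Type*} [TopologicalSpace K] (c : ConeStruct K)

theorem g_inv_g {l : ℝ} (hl : 0 < l) (z : K) : c.g l⁻¹ (c.g l z) = z := by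
  rw [← c.g_mul _ _ (inv_pos.2 hl) hl, inv_mul_cancel₀ hl.ne', c.g_one, id]

theorem exists_comp_g {l : ℝ} (hl : 0 < l) (φ : C₀(K, ℂ)) :
    ∃ φ' : C₀(K, ℂ), ∀ z, φ' z = φ (c.g l z) := by
  let dilation : K ≃ₜ K :=
    { toFun := c.g l
      invFun := c.g l⁻¹
      left_inv := c.g_inv_g hl
      right_inv z := by simpa only [inv_inv] using c.g_inv_g (inv_pos.2 hl) z
      continuous_toFun := c.g_cont l hl
      continuous_invFun := c.g_cont l⁻¹ (inv_pos.2 hl) }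
  exact ⟨φ.comp dilation.toCocompactMap, fun _ => rfl⟩

theorem eventually_image_g_inv_subset {Q : Set K} (hQ : IsCompact Q) {V : Set K}
    (hV : V ∈ 𝓝 c.vertex) : ∀ᶠ l in atTop, c.g l⁻¹ '' Q ⊆ V := by
  obtain ⟨ε, hε, hshrink⟩ := c.g_shrink Q hQ V hV
  filter_upwards [eventually_gt_atTop ε⁻¹] with l hl
  have hl0 : 0 < l := (inv_pos.2 hε).trans hl
  exact hshrink l⁻¹ (inv_pos.2 hl0) (inv_lt_of_inv_lt₀ hε hl)

end ConeStruct

section Localization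

variable {K : Type*} [TopologicalSpace K] {c : ConeStruct K} {φ : C₀(K, ℂ)}

theorem eq_ofReal_re_of_mem_coneLocClass (hφ : φ ∈ coneLocClass c) (z : K) :
    φ z = ((φ z).re : ℂ) :=
  Complex.ext rfl (by simp [(hφ.2.1 z).2])

theorem norm_apply_le_one_of_mem_coneLocClass (hφ : φ ∈ coneLocClass c) (z : K) :
    ‖φ z‖ ≤ 1 := by
  obtain ⟨⟨h0, h1⟩, -⟩ := hφ.2.1 z
  rw [eq_ofReal_re_of_mem_coneLocClass hφ, Complex.norm_real, Real.norm_eq_abs, abs_le]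
  constructor <;> linarith

theorem norm_one_sub_apply_le_one_of_mem_coneLocClass (hφ : φ ∈ coneLocClass c) (z : K) :
    ‖1 - φ z‖ ≤ 1 := by
  obtain ⟨⟨h0, h1⟩, -⟩ := hφ.2.1 z
  rw [eq_ofReal_re_of_mem_coneLocClass hφ, ← Complex.ofReal_one, ← Complex.ofReal_sub,
    Complex.norm_real, Real.norm_eq_abs, abs_le]
  constructor <;> linarith

theorem norm_comp_g_le_one_of_mem_coneLocClass (hφ : φ ∈ coneLocClass c) {l : ℝ}
    {φ' : C₀(K, ℂ)} (hφ' : ∀ z, φ' z = φ (c.g l z)) : ‖φ'‖ ≤ 1 :=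
  ZeroAtInftyContinuousMap.norm_le_of_forall_le zero_le_one fun z =>
    hφ' z ▸ norm_apply_le_one_of_mem_coneLocClass hφ _

theorem eventually_norm_sub_mul_comp_g_inv_le (hφ : φ ∈ coneLocClass c) (σ : C₀(K, ℂ))
    {η : ℝ} (hη : 0 < η) :
    ∀ᶠ l in atTop, ∀ φ' : C₀(K, ℂ), (∀ z, φ' z = φ (c.g l⁻¹ z)) → ‖σ - φ' * σ‖ ≤ η := by
  obtain ⟨V, hV, hφV⟩ := hφ.2.2
  have hσ_small : ∀ᶠ z in cocompact K, ‖σ z‖ < η := by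
    simpa only [dist_zero_right] using Metric.tendsto_nhds.1 (zero_at_infty σ) η hη
  obtain ⟨Q, hQ, hQσ⟩ := mem_cocompact.1 hσ_small
  filter_upwards [c.eventually_image_g_inv_subset hQ hV] with l hl φ' hφ'
  refine ZeroAtInftyContinuousMap.norm_le_of_forall_le hη.le fun z => ?_
  have hz : (σ - φ' * σ) z = (1 - φ' z) * σ z := by
    simp only [ZeroAtInftyContinuousMap.coe_sub, ZeroAtInftyContinuousMap.coe_mul, Pi.sub_apply,
      Pi.mul_apply]; ring
  rw [hz, norm_mul]
  by_cases hzQ : z ∈ Q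
  · rw [hφ', hφV _ (hl ⟨z, hzQ, rfl⟩), sub_self, norm_zero, zero_mul]
    exact hη.le
  · calc ‖1 - φ' z‖ * ‖σ z‖ ≤ 1 * η := by
          gcongr
          · exact hφ' z ▸ norm_one_sub_apply_le_one_of_mem_coneLocClass hφ _
          · exact (hQσ hzQ).le
      _ = η := one_mul η

end Localization

section Homogeneous

variable {K : Type*} [TopologicalSpace K]
  {H : Type*} [NormedAddCommGroup H] [InnerProductSpace ℂ H] [CompleteSpace H]
  {Y : Type*} {c : ConeStruct K} {π : C₀(K, ℂ) →⋆ₙₐ[ℂ] (H →L[ℂ] H)} {φ : C₀(K, ℂ)}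

theorem eventually_norm_sub_apply_comp_g_inv_le (hnd : NondegenerateModule π)
    (hφ : φ ∈ coneLocClass c) (u : H) {δ : ℝ} (hδ : 0 < δ) :
    ∀ᶠ l in atTop, ∀ φ' : C₀(K, ℂ), (∀ z, φ' z = φ (c.g l⁻¹ z)) → ‖u - π φ' u‖ ≤ δ := by
  obtain ⟨σ, hσ⟩ := hnd u (δ / 3) (by positivity)
  have hη : 0 < δ / 3 / (‖u‖ + 1) := by positivity
  filter_upwards [eventually_norm_sub_mul_comp_g_inv_le hφ σ hη] with l hl φ' hφ'
  have hφ'_le : ‖π φ'‖ ≤ 1 :=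
    (NonUnitalStarAlgHom.norm_apply_le π φ').trans (norm_comp_g_le_one_of_mem_coneLocClass hφ hφ')
  have hsplit : u - π φ' u = (u - π σ u) + π (σ - φ' * σ) u + π φ' (π σ u - u) := by
    simp only [map_sub, map_mul, sub_apply, mul_apply_eq_comp]
    abel
  calc ‖u - π φ' u‖ ≤ ‖u - π σ u‖ + ‖π (σ - φ' * σ) u‖ + ‖π φ' (π σ u - u)‖ :=
        (congrArg norm hsplit).trans_le norm_add₃_le
    _ ≤ δ / 3 + δ / 3 + δ / 3 := by
        gcongr ?_ + ?_ + ?_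
        · rw [norm_sub_rev]; exact hσ.le
        · calc ‖π (σ - φ' * σ) u‖ ≤ δ / 3 / (‖u‖ + 1) * ‖u‖ :=
                (ContinuousLinearMap.le_opNorm _ _).trans
                  (by gcongr; exact (NonUnitalStarAlgHom.norm_apply_le π _).trans (hl φ' hφ'))
            _ ≤ δ / 3 := by
                rw [div_mul_eq_mul_div, div_le_iff₀ (by positivity)]
                nlinarith [norm_nonneg u]
        · calc ‖π φ' (π σ u - u)‖ ≤ 1 * (δ / 3) :=
                (ContinuousLinearMap.le_opNorm _ _).trans (by gcongr)
            _ = δ / 3 := one_mul _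
    _ = δ := by ring

variable {U : ℝ → H →L[ℂ] H} {act : ℝ → Y → Y} {B : Y → H →L[ℂ] H}

theorem comp_comp_eq_conj_of_isHomogeneousFamily (hcomp : DilCompatible π c U)
    (hhom : IsHomogeneousFamily U act B) {l : ℝ} (hl : 0 < l) {φ' : C₀(K, ℂ)}
    (hφ' : ∀ z, φ' z = φ (c.g l⁻¹ z)) (y : Y) :
    π φ' ∘L B y ∘L π φ' = U l⁻¹ ∘L (π φ ∘L B (act l y) ∘L π φ) ∘L U l := by
  have hleft : π φ' ∘L U l⁻¹ = U l⁻¹ ∘L π φ := hcomp l⁻¹ (inv_pos.2 hl) φ φ' hφ'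
  have hright : π φ ∘L U l = U l ∘L π φ' :=
    hcomp l hl φ' φ fun z => by rw [hφ', c.g_inv_g hl]
  rw [← hhom l hl y]
  simp only [← ContinuousLinearMap.comp_assoc, hleft]
  simp only [ContinuousLinearMap.comp_assoc, hright]

theorem norm_le_of_forall_norm_comp_comp_le (hnd : NondegenerateModule π)
    (hU : ∀ l : ℝ, 0 < l → ∀ v, ‖U l v‖ = ‖v‖) (hcomp : DilCompatible π c U)
    (hhom : IsHomogeneousFamily U act B) (hφ : φ ∈ coneLocClass c) {C : ℝ}
    (hC : ∀ z, ‖π φ ∘L B z ∘L π φ‖ ≤ C) (y : Y) : ‖B y‖ ≤ C := by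
  refine ContinuousLinearMap.opNorm_le_bound _ ((norm_nonneg _).trans (hC y)) fun v => ?_
  refine le_of_forall_pos_le_add fun ε hε => ?_
  set δ := ε / (1 + ‖B y‖) with hδ_def
  have hδ : 0 < δ := by positivity
  obtain ⟨l, hl, hv, hBv⟩ := ((eventually_gt_atTop 0).and
    ((eventually_norm_sub_apply_comp_g_inv_le hnd hφ v hδ).and
      (eventually_norm_sub_apply_comp_g_inv_le hnd hφ (B y v) hδ))).exists
  obtain ⟨φ', hφ'⟩ := c.exists_comp_g (inv_pos.2 hl) φ
  have hφ'_le : ‖π φ'‖ ≤ 1 :=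
    (NonUnitalStarAlgHom.norm_apply_le π φ').trans (norm_comp_g_le_one_of_mem_coneLocClass hφ hφ')
  have hlocalized : ‖(π φ' ∘L B y ∘L π φ') v‖ ≤ C * ‖v‖ := by
    rw [comp_comp_eq_conj_of_isHomogeneousFamily hcomp hhom hl hφ',
      ContinuousLinearMap.comp_apply, ContinuousLinearMap.comp_apply, hU _ (inv_pos.2 hl),
      ← hU l hl v]
    exact (ContinuousLinearMap.le_opNorm _ _).trans (by gcongr; exact hC _)
  calc ‖B y v‖ ≤ ‖(π φ' ∘L B y ∘L π φ') v‖ + ‖B y v - π φ' (B y v)‖ + ‖B y‖ * ‖v - π φ' v‖ :=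
        ContinuousLinearMap.norm_apply_le_norm_comp_comp_apply_add hφ'_le _ _
    _ ≤ C * ‖v‖ + δ + ‖B y‖ * δ := by gcongr; exacts [hBv φ' hφ', hv φ' hφ']
    _ = C * ‖v‖ + ε := by rw [hδ_def]; field_simp; ring

end Homogeneous

theorem homogeneous_norm_eq_localized_norm_general
    {K : Type*} [TopologicalSpace K]
    {H : Type*} [NormedAddCommGroup H] [InnerProductSpace ℂ H] [CompleteSpace H]
    {Y : Type*}
    (c : ConeStruct K) (π : C₀(K, ℂ) →⋆ₙₐ[ℂ] (H →L[ℂ] H))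
    (hnd : NondegenerateModule π)
    (U : ℝ → H →L[ℂ] H) (hU : IsUnitaryDilGroup U) (hcomp : DilCompatible π c U)
    (act : ℝ → Y → Y)
    (B : Y → H →L[ℂ] H)
    (hhom : IsHomogeneousFamily U act B) :
    ∀ φ ∈ coneLocClass c,
      (⨆ y : Y, ‖B y‖) = ⨆ y : Y, ‖(π φ) ∘L B y ∘L (π φ)‖ := by
  intro φ hφ
  have hπφ : ‖π φ‖ ≤ 1 := (NonUnitalStarAlgHom.norm_apply_le π φ).trans
    (ZeroAtInftyContinuousMap.norm_le_of_forall_le zero_le_one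
      (norm_apply_le_one_of_mem_coneLocClass hφ))
  exact ciSup_eq_ciSup_of_le_of_forall_le
    (fun y => ContinuousLinearMap.norm_comp_comp_le_of_norm_le_one hπφ (B y))
    (fun _ hC => norm_le_of_forall_norm_comp_comp_le hnd hU.2.2.1 hcomp hhom hφ hC)

/-- A homogeneous element `B ∈ L_∞` satisfies `‖B‖ = ‖φBφ‖` for every
function `φ` of the localizing class `F₀` at the cone vertex, where the norm is the
supremum over the parameter `y`. -/
theorem homogeneous_norm_eq_localized_norm
    {K : Type*} [TopologicalSpace K] [LocallyCompactSpace K] [T2Space K]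
    {H : Type*} [NormedAddCommGroup H] [InnerProductSpace ℂ H] [CompleteSpace H]
    {Y : Type*} [TopologicalSpace Y]
    (c : ConeStruct K) (π : C₀(K, ℂ) →⋆ₙₐ[ℂ] (H →L[ℂ] H))
    (hnd : NondegenerateModule π) (hloc : VertexLocConv π c)
    (U : ℝ → H →L[ℂ] H) (hU : IsUnitaryDilGroup U) (hcomp : DilCompatible π c U)
    (act : ℝ → Y → Y) (hact_cont : ∀ l : ℝ, 0 < l → Continuous (act l))
    (hact_one : act 1 = id)
    (hact_mul : ∀ l m : ℝ, 0 < l → 0 < m → ∀ y, act (l * m) y = act l (act m y))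
    (B : Y → H →L[ℂ] H) (hB : MemLAlg π B)
    (hhom : IsHomogeneousFamily U act B) :
    ∀ φ ∈ coneLocClass c,
      (⨆ y : Y, ‖B y‖) = ⨆ y : Y, ‖(π φ) ∘L B y ∘L (π φ)‖ :=
  homogeneous_norm_eq_localized_norm_general c π hnd U hU hcomp act B hhom
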